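/- Let G be a discrete infinite commutative group, (G,X) a G-system, x ∈ X, and F = (F_n)_{n∈D} a Følner net in G. Suppose C_F(x) is S-generic, C_F(x) is not a minimal subset of (G,X), and the almost periodic points of (G,X) are dense in C_F(x). Let k ≥ 2 and let M₁, …, M_k be pairwise distinct minimal subsets of (G,X) contained in C_F(x). Then for every δ > 0, every z ∈ C_F(x), and every open neighborhood U of z, the intersection N(U, B_δ(M₁)) ∩ ⋯ ∩ N(U, B_δ(M_k)) is nonempty. -/

import Mathlib

/-!
Each hitting set `N(U, B_δ(Mᵢ))` is thickly syndetic. Given a finite `K ⊆ G`, the open set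
`Ω = ⋂_{κ ∈ K} κ⁻¹ B_δ(Mᵢ)` contains the invariant set `Mᵢ ⊆ C_F(x)`. Since `C_F(x) = C_F(z₀)` for
some `z₀`, the orbit of `z₀` visits both `U` and `Ω`, so some `a` maps a point `t z₀ ∈ U` of
`C_F(x)` (which is `G`-invariant by the Følner property) into `Ω`. By density, the same holds
for an almost periodic point `w ∈ U`, and then `a N(w, a⁻¹Ω)` is a syndetic set of `g` with
`K g ⊆ N(U, B_δ(Mᵢ))`. Thickly syndetic sets are closed under finite intersections and are nonempty.
-/

open Filter Metric Set

section Defs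

variable {G : Type*} [Group G] [DecidableEq G]
variable {D : Type*} [Preorder D]

/-- `F` is a (left) Følner net in `G`. -/
def IsFolnerNet (F : D → Finset G) : Prop :=
  (∀ n, (F n).Nonempty) ∧
    ∀ g : G,
      Tendsto (fun n : D =>
          ((symmDiff ((F n).image fun h => g * h) (F n)).card : ℝ) / (F n).card)
        atTop (nhds 0)

/-- Upper density of `A ⊆ G` relative to the net `F`. -/
noncomputable def upperDensity (F : D → Finset G) (A : Set G) : ℝ :=
  sSup {α : ℝ | ∀ m : D, ∃ n : D, m ≤ n ∧
    α ≤ (((F n : Set G) ∩ A).ncard : ℝ) / (F n).card}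

variable {X : Type*} [MetricSpace X] [MulAction G X]

/-- The minimal `F`-center of attraction of `x`. -/
def minCenter (F : D → Finset G) (x : X) : Set X :=
  {y : X | ∀ U : Set X, IsOpen U → y ∈ U → 0 < upperDensity F {g : G | g • x ∈ U}}

end Defs

/-- `Λ` is a minimal subset of the `G`-system: nonempty, closed, `G`-invariant, and containing
no nonempty proper closed `G`-invariant subset. -/
def IsMinimalSubset (G : Type*) [Group G] {X : Type*} [MetricSpace X] [MulAction G X]
    (Λ : Set X) : Prop :=
  Λ.Nonempty ∧ IsClosed Λ ∧ (∀ g : G, ∀ z ∈ Λ, g • z ∈ Λ) ∧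
    ∀ Λ' ⊆ Λ, Λ'.Nonempty → IsClosed Λ' → (∀ g : G, ∀ z ∈ Λ', g • z ∈ Λ') → Λ' = Λ

/-- `S ⊆ G` is syndetic: there is a finite `F ⊆ G` with `⋃_{f ∈ F} f⁻¹ S = G`. -/
def IsSyndeticSet {G : Type*} [Group G] (S : Set G) : Prop :=
  ∃ F : Finset G, ∀ g : G, ∃ f ∈ F, f * g ∈ S

/-- `z` is an almost periodic point: `N(z, U)` is syndetic for every open neighborhood `U`. -/
def IsAlmostPeriodicPt (G : Type*) [Group G] {X : Type*} [MetricSpace X] [MulAction G X]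
    (z : X) : Prop :=
  ∀ U : Set X, IsOpen U → z ∈ U → IsSyndeticSet {g : G | g • z ∈ U}

section Density

variable {G : Type*} {D : Type*} [Preorder D] [Nonempty D]

theorem upperDensity_pos_iff {F : D → Finset G} {A : Set G} :
    0 < upperDensity F A ↔ ∃ β > 0, ∀ m : D, ∃ n : D, m ≤ n ∧
      β ≤ (((F n : Set G) ∩ A).ncard : ℝ) / (F n).card := by
  have hbdd : BddAbove {α : ℝ | ∀ m : D, ∃ n : D, m ≤ n ∧
      α ≤ (((F n : Set G) ∩ A).ncard : ℝ) / (F n).card} := by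
    refine ⟨1, fun α hα => ?_⟩
    obtain ⟨n, -, hn⟩ := hα (Classical.arbitrary D)
    refine hn.trans (div_le_one_of_le₀ ?_ (by positivity))
    exact_mod_cast (ncard_le_ncard inter_subset_left (F n).finite_toSet).trans_eq
      (ncard_coe_finset _)
  unfold upperDensity
  constructor
  · intro h
    obtain ⟨β, hβ, hβ0⟩ := exists_lt_of_lt_csSup ⟨0, fun m => ⟨m, le_rfl, by positivity⟩⟩ h
    exact ⟨β, hβ0, hβ⟩
  · rintro ⟨β, hβ0, hβ⟩
    exact hβ0.trans_le (le_csSup hbdd hβ)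

theorem nonempty_of_upperDensity_pos {F : D → Finset G} {A : Set G}
    (h : 0 < upperDensity F A) : A.Nonempty := by
  obtain ⟨β, hβ0, hβ⟩ := upperDensity_pos_iff.mp h
  obtain ⟨n, -, hn⟩ := hβ (Classical.arbitrary D)
  have hcard : ((F n : Set G) ∩ A).ncard ≠ 0 := by
    intro h0
    rw [h0, Nat.cast_zero, zero_div] at hn
    linarith
  exact (nonempty_of_ncard_ne_zero hcard).mono inter_subset_right

variable [Group G] [DecidableEq G]

omit [Nonempty D] in
theorem ncard_inter_le_add_card_symmDiff (F : Finset G) (h : G) {A B : Set G}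
    (hAB : ∀ a ∈ A, h * a ∈ B) :
    ((F : Set G) ∩ A).ncard ≤
      ((F : Set G) ∩ B).ncard + (symmDiff (F.image fun x => h * x) F).card := by
  have himage : (h * ·) '' ((F : Set G) ∩ A) ⊆
      ((F : Set G) ∩ B) ∪ ((F.image (h * ·) : Set G) \ F) := by
    rintro _ ⟨a, ⟨haF, haA⟩, rfl⟩
    by_cases hc : h * a ∈ (F : Set G)
    · exact Or.inl ⟨hc, hAB a haA⟩
    · exact Or.inr ⟨Finset.mem_coe.mpr (Finset.mem_image_of_mem _ haF), hc⟩
  have hdiff :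
      ((F.image (h * ·) : Set G) \ F).ncard ≤ (symmDiff (F.image (h * ·)) F).card := by
    refine (ncard_le_ncard (fun a ha => ?_) (Finset.finite_toSet _)).trans_eq
      (ncard_coe_finset _)
    rw [Finset.mem_coe, Finset.mem_symmDiff]
    exact Or.inl ⟨ha.1, ha.2⟩
  calc ((F : Set G) ∩ A).ncard
      = ((h * ·) '' ((F : Set G) ∩ A)).ncard :=
        (ncard_image_of_injective _ (mul_right_injective h)).symm
    _ ≤ (((F : Set G) ∩ B) ∪ ((F.image (h * ·) : Set G) \ F)).ncard :=
        ncard_le_ncard himage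
          ((F.finite_toSet.inter_of_left B).union (Finset.finite_toSet _).sdiff)
    _ ≤ ((F : Set G) ∩ B).ncard + ((F.image (h * ·) : Set G) \ F).ncard := ncard_union_le _ _
    _ ≤ _ := by omega

theorem upperDensity_pos_of_mul_left_mem [IsDirected D (· ≤ ·)] {F : D → Finset G}
    (hF : IsFolnerNet F) (h : G) {A B : Set G} (hAB : ∀ a ∈ A, h * a ∈ B)
    (hA : 0 < upperDensity F A) : 0 < upperDensity F B := by
  obtain ⟨β, hβ0, hβ⟩ := upperDensity_pos_iff.mp hA
  obtain ⟨m₀, hm₀⟩ := eventually_atTop.mp <| (hF.2 h).eventually_lt_const (half_pos hβ0)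
  refine upperDensity_pos_iff.mpr ⟨β / 2, half_pos hβ0, fun m => ?_⟩
  obtain ⟨m₁, hmm₁, hm₀m₁⟩ := directed_of (· ≤ ·) m m₀
  obtain ⟨n, hn, hAn⟩ := hβ m₁
  refine ⟨n, hmm₁.trans hn, ?_⟩
  have hsmall := hm₀ n (hm₀m₁.trans hn)
  have hcard : (((F n : Set G) ∩ A).ncard : ℝ) ≤ ((F n : Set G) ∩ B).ncard +
      (symmDiff ((F n).image fun x => h * x) (F n)).card := by
    exact_mod_cast ncard_inter_le_add_card_symmDiff (F n) h hAB
  have hratio := div_le_div_of_nonneg_right hcard (Nat.cast_nonneg (F n).card)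
  rw [add_div] at hratio
  linarith

variable {X : Type*} [MetricSpace X] [MulAction G X] [ContinuousConstSMul G X]

theorem smul_mem_minCenter [IsDirected D (· ≤ ·)] {F : D → Finset G} (hF : IsFolnerNet F)
    {x y : X} (hy : y ∈ minCenter F x) (h : G) : h • y ∈ minCenter F x := by
  intro W hW hhy
  refine upperDensity_pos_of_mul_left_mem hF h (fun a ha => ?_)
    (hy _ (hW.preimage (continuous_const_smul h)) hhy)
  simpa [mul_smul] using ha

end Density

section Syndetic

open scoped Pointwise

variable {G : Type*} [Group G]

theorem IsSyndeticSet.nonempty {S : Set G} (hS : IsSyndeticSet S) : S.Nonempty := by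
  obtain ⟨F, hF⟩ := hS
  obtain ⟨f, -, hf⟩ := hF 1
  exact ⟨f * 1, hf⟩

theorem IsSyndeticSet.mono {S T : Set G} (hS : IsSyndeticSet S) (hST : S ⊆ T) :
    IsSyndeticSet T := by
  obtain ⟨F, hF⟩ := hS
  exact ⟨F, fun g => (hF g).imp fun _ => And.imp_right (@hST _)⟩

theorem IsSyndeticSet.of_mul_left_mem {S T : Set G} (hS : IsSyndeticSet S) (a : G)
    (hST : ∀ s ∈ S, a * s ∈ T) : IsSyndeticSet T := by
  obtain ⟨F, hF⟩ := hS
  refine ⟨F.map (mulLeftEmbedding a), fun g => ?_⟩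
  obtain ⟨f, hfF, hfg⟩ := hF g
  refine ⟨a * f, Finset.mem_map_of_mem _ hfF, ?_⟩
  simpa only [mul_assoc] using hST _ hfg

def IsThicklySyndetic (A : Set G) : Prop :=
  ∀ K : Finset G, IsSyndeticSet {g : G | ∀ κ ∈ K, κ * g ∈ A}

theorem IsThicklySyndetic.nonempty {A : Set G} (hA : IsThicklySyndetic A) : A.Nonempty := by
  obtain ⟨g, hg⟩ := (hA {1}).nonempty
  exact ⟨1 * g, hg 1 (Finset.mem_singleton_self 1)⟩

theorem isThicklySyndetic_univ : IsThicklySyndetic (univ : Set G) :=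
  fun _ => ⟨{1}, fun _ => ⟨1, Finset.mem_singleton_self 1, fun _ _ => mem_univ _⟩⟩

theorem IsThicklySyndetic.inter {A B : Set G} (hA : IsThicklySyndetic A)
    (hB : IsThicklySyndetic B) : IsThicklySyndetic (A ∩ B) := by
  classical
  intro K
  obtain ⟨E, hE⟩ := hB K
  obtain ⟨E', hE'⟩ := hA (K * E)
  refine ⟨E * E', fun g => ?_⟩
  obtain ⟨e', he'E', he'⟩ := hE' g
  obtain ⟨e, heE, he⟩ := hE (e' * g)
  refine ⟨e * e', Finset.mul_mem_mul heE he'E', fun κ hκ => ⟨?_, ?_⟩⟩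
  · simpa only [mul_assoc] using he' (κ * e) (Finset.mul_mem_mul hκ heE)
  · simpa only [mul_assoc] using he κ hκ

theorem IsThicklySyndetic.iInter {ι : Type*} [Finite ι] {A : ι → Set G}
    (hA : ∀ i, IsThicklySyndetic (A i)) : IsThicklySyndetic (⋂ i, A i) := by
  classical
  cases nonempty_fintype ι
  have hfin : ∀ s : Finset ι, IsThicklySyndetic (⋂ i ∈ s, A i) := by
    intro s
    induction s using Finset.induction_on with
    | empty => simpa using isThicklySyndetic_univ
    | insert i s _ ih =>
      rw [Finset.set_biInter_insert]
      exact (hA i).inter ih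
  simpa using hfin Finset.univ

end Syndetic

section Hitting

variable (G : Type*) [Group G] {X : Type*} [MetricSpace X] [MulAction G X]

/-- The paper's `N(U, W)`. -/
def hittingSet (U W : Set X) : Set G :=
  {g : G | ∃ u ∈ U, g • u ∈ W}

variable {G} [ContinuousConstSMul G X]

theorem IsAlmostPeriodicPt.isSyndeticSet_hittingSet {w : X} (hw : IsAlmostPeriodicPt G w)
    {U W : Set X} (hwU : w ∈ U) (hW : IsOpen W) {a : G} (ha : a • w ∈ W) :
    IsSyndeticSet (hittingSet G U W) := by
  refine (hw _ (hW.preimage (continuous_const_smul a)) ha).of_mul_left_mem a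
    fun h hh => ⟨w, hwU, ?_⟩
  rw [mul_smul]
  exact hh

theorem isThicklySyndetic_hittingSet {U W M : Set X} (hW : IsOpen W) (hMW : M ⊆ W)
    (hMinv : ∀ g : G, ∀ m ∈ M, g • m ∈ M)
    (hreach : ∀ Ω : Set X, IsOpen Ω → M ⊆ Ω →
      ∃ w ∈ U, IsAlmostPeriodicPt G w ∧ ∃ a : G, a • w ∈ Ω) :
    IsThicklySyndetic (hittingSet G U W) := by
  intro K
  set Ω : Set X := ⋂ κ ∈ K, (κ • ·) ⁻¹' W
  have hΩ : IsOpen Ω :=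
    isOpen_biInter_finset fun κ _ => hW.preimage (continuous_const_smul κ)
  have hMΩ : M ⊆ Ω := fun m hm => mem_iInter₂.mpr fun κ _ => hMW (hMinv κ m hm)
  obtain ⟨w, hwU, hw, a, ha⟩ := hreach Ω hΩ hMΩ
  refine (hw.isSyndeticSet_hittingSet hwU hΩ ha).mono ?_
  rintro g ⟨u, hu, hgu⟩ κ hκ
  exact ⟨u, hu, by rw [mul_smul]; exact mem_iInter₂.mp hgu κ hκ⟩

theorem exists_isAlmostPeriodicPt_smul_mem [DecidableEq G] {D : Type*} [Preorder D]
    [IsDirected D (· ≤ ·)] [Nonempty D] {F : D → Finset G} (hF : IsFolnerNet F) {x : X}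
    (hS : ∃ z ∈ minCenter F x, minCenter F z = minCenter F x)
    (hdense : minCenter F x ⊆ closure {z : X | z ∈ minCenter F x ∧ IsAlmostPeriodicPt G z})
    {U Ω : Set X} (hU : IsOpen U) (hΩ : IsOpen Ω) (hUC : (U ∩ minCenter F x).Nonempty)
    (hΩC : (Ω ∩ minCenter F x).Nonempty) :
    ∃ w ∈ U, IsAlmostPeriodicPt G w ∧ ∃ a : G, a • w ∈ Ω := by
  obtain ⟨z₀, hz₀, hz₀C⟩ := hS
  obtain ⟨y, hyU, hyC⟩ := hUC
  obtain ⟨y', hy'Ω, hy'C⟩ := hΩC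
  rw [← hz₀C] at hyC hy'C
  obtain ⟨t, ht⟩ := nonempty_of_upperDensity_pos (hyC U hU hyU)
  obtain ⟨r, hr⟩ := nonempty_of_upperDensity_pos (hy'C Ω hΩ hy'Ω)
  set V : Set X := U ∩ ((r * t⁻¹) • ·) ⁻¹' Ω
  have hV : IsOpen V := hU.inter (hΩ.preimage (continuous_const_smul _))
  have htV : t • z₀ ∈ V := ⟨ht, by simpa only [mem_preimage, smul_smul, inv_mul_cancel_right]⟩
  obtain ⟨w, hwV, -, hw⟩ :=
    _root_.mem_closure_iff.mp (hdense (smul_mem_minCenter hF hz₀ t)) V hV htV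
  exact ⟨w, hwV.1, hw, r * t⁻¹, hwV.2⟩

end Hitting

theorem inter_hitting_thickenings_nonempty_general
    {G : Type*} [Group G] [DecidableEq G]
    {D : Type*} [Preorder D] [IsDirected D (· ≤ ·)] [Nonempty D]
    {X : Type*} [MetricSpace X] [MulAction G X]
    (hcont : ∀ g : G, Continuous fun y : X => g • y)
    (Fol : D → Finset G) (hFol : IsFolnerNet Fol) (x : X)
    (hS : ∃ z ∈ minCenter Fol x, minCenter Fol z = minCenter Fol x)
    (hdense : minCenter Fol x ⊆
      closure {z : X | z ∈ minCenter Fol x ∧ IsAlmostPeriodicPt G z})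
    (k : ℕ) (M : Fin k → Set X)
    (hMmin : ∀ i, IsMinimalSubset G (M i)) (hMsub : ∀ i, M i ⊆ minCenter Fol x)
    (δ : ℝ) (hδ : 0 < δ) (z : X) (hz : z ∈ minCenter Fol x)
    (U : Set X) (hU : IsOpen U) (hzU : z ∈ U) :
    ∃ g : G, ∀ i, ∃ u ∈ U, g • u ∈ Metric.thickening δ (M i) := by
  have : ContinuousConstSMul G X := ⟨hcont⟩
  have hN : ∀ i, IsThicklySyndetic (hittingSet G U (thickening δ (M i))) := by
    intro i
    obtain ⟨m, hm⟩ := (hMmin i).1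
    refine isThicklySyndetic_hittingSet isOpen_thickening (self_subset_thickening hδ _)
      (hMmin i).2.2.1 fun Ω hΩ hMΩ => ?_
    exact exists_isAlmostPeriodicPt_smul_mem hFol hS hdense hU hΩ ⟨z, hzU, hz⟩
      ⟨m, hMΩ hm, hMsub i hm⟩
  obtain ⟨g, hg⟩ := (IsThicklySyndetic.iInter hN).nonempty
  exact ⟨g, mem_iInter.mp hg⟩

/-- Claim 4.4: for a commutative `G`, if `C_F(x)` is S-generic, non-minimal and has dense
almost periodic points, then for pairwise distinct minimal subsets `M₁, …, M_k ⊆ C_F(x)`,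
any `δ > 0` and any open neighborhood `U` of a point of `C_F(x)`, the intersection
`N(U, B_δ(M₁)) ∩ ⋯ ∩ N(U, B_δ(M_k))` is nonempty. -/
theorem inter_hitting_thickenings_nonempty
    {G : Type*} [Group G] [Infinite G] [DecidableEq G]
    {D : Type*} [Preorder D] [IsDirected D (· ≤ ·)] [Nonempty D]
    {X : Type*} [MetricSpace X] [CompactSpace X] [MulAction G X]
    (hcomm : ∀ a b : G, a * b = b * a)
    (hcont : ∀ g : G, Continuous fun y : X => g • y)
    (Fol : D → Finset G) (hFol : IsFolnerNet Fol) (x : X)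
    (hS : ∃ z ∈ minCenter Fol x, minCenter Fol z = minCenter Fol x)
    (hnotmin : ¬ IsMinimalSubset G (minCenter Fol x))
    (hdense : minCenter Fol x ⊆
      closure {z : X | z ∈ minCenter Fol x ∧ IsAlmostPeriodicPt G z})
    (k : ℕ) (hk : 2 ≤ k) (M : Fin k → Set X)
    (hMmin : ∀ i, IsMinimalSubset G (M i)) (hMsub : ∀ i, M i ⊆ minCenter Fol x)
    (hMdist : ∀ i j, i ≠ j → M i ≠ M j)
    (δ : ℝ) (hδ : 0 < δ) (z : X) (hz : z ∈ minCenter Fol x)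
    (U : Set X) (hU : IsOpen U) (hzU : z ∈ U) :
    ∃ g : G, ∀ i, ∃ u ∈ U, g • u ∈ Metric.thickening δ (M i) :=
  inter_hitting_thickenings_nonempty_general hcont Fol hFol x hS hdense k M hMmin hMsub δ hδ z hz U
    hU hzU
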